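/- (Radius bounds for transition costs, Proposition C.2.) Assume Condition A. For conventions i ≠ j define R_{ij} = (1/2)(A_{ii} − A_{ji})² / [(A_{ii} − A_{ji}) + (A_{jj} − A_{ij})], and let C^{(n)}_{ij} = inf{I^{(n)}(γ) : γ ∈ ℒ^{(n)}_{i,j}} be the minimal cost of a path from convention i into the basin of attraction of convention j. Then: (i) limsup_{n→∞} (1/n)·C^{(n)}_{ij} ≤ R_{ij} for all j ≠ i; and (ii) lim_{n→∞} (1/n)·min_{j ≠ i} C^{(n)}_{ij} = min_{j ≠ i} R_{ij}. -/

import Mathlib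

open Finset Filter

noncomputable section

/-- Expected payoff of strategy `i` at state `x`: `π(i,x) = ∑ j, A i j * x j`. -/
def pay {s : ℕ} (A : Fin s → Fin s → ℝ) (i : Fin s) (x : Fin s → ℝ) : ℝ :=
  ∑ j, A i j * x j

/-- The `i`-th standard basis vector `e_i` of `ℝ^s`. -/
def vertex {s : ℕ} (i : Fin s) : Fin s → ℝ := fun j => if j = i then 1 else 0

/-- The discrete simplex `Δ^{(n)}`. -/
def simplexD (s n : ℕ) : Set (Fin s → ℝ) :=
  {x | (∀ i, 0 ≤ x i) ∧ (∑ i, x i) = 1 ∧ ∀ i, ∃ k : ℤ, x i = (k : ℝ) / n}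

/-- The basin of attraction `D^{(n)}(e_m)` of the convention `m`. -/
def basin {s : ℕ} (A : Fin s → Fin s → ℝ) (n : ℕ) (m : Fin s) : Set (Fin s → ℝ) :=
  {x | x ∈ simplexD s n ∧ ∀ k, pay A m x ≥ pay A k x}

/-- The state `x^{i,j}` obtained from `x` when one agent switches from `i` to `j`. -/
def step {s : ℕ} (n : ℕ) (x : Fin s → ℝ) (i j : Fin s) : Fin s → ℝ :=
  fun h => x h + (1 / (n : ℝ)) * (vertex j h - vertex i h)

/-- Logit cost of a single transition whose target strategy is `j`:
`c^{(n)}(x, x^{i,j}) = max_l π(l,x) − π(j,x)`. -/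
def logitCost {s : ℕ} (A : Fin s → Fin s → ℝ) (x : Fin s → ℝ) (j : Fin s) : ℝ :=
  (⨆ l, pay A l x) - pay A j x

/-- The marginal bandwagon property. -/
def MBP {s : ℕ} (A : Fin s → Fin s → ℝ) : Prop :=
  ∀ i j k : Fin s, i ≠ j → j ≠ k → i ≠ k → A i i - A j i > A i k - A j k


/-- Cost of the path obtained by applying the list of single-agent transitions `σ`
(each a pair `(i, j)` meaning one agent switches from `i` to `j`) starting at `x`. -/
def pathCostL {s : ℕ} (A : Fin s → Fin s → ℝ) (n : ℕ) :
    (Fin s → ℝ) → List (Fin s × Fin s) → ℝ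
  | _, [] => 0
  | x, mv :: σ => logitCost A x mv.2 + pathCostL A n (step n x mv.1 mv.2) σ

/-- The state reached after the first `t` transitions of `σ`, starting from `x`. -/
def stateAt {s : ℕ} (n : ℕ) (x : Fin s → ℝ) (σ : List (Fin s × Fin s)) (t : ℕ) :
    Fin s → ℝ :=
  (σ.take t).foldl (fun y mv => step n y mv.1 mv.2) x

/-- `σ` encodes a path in `𝒢^{(n)}_m`: it starts at the convention `e_m`, its states
`x_t` for `0 < t < T - 1` lie in the basin of attraction of `m`, and its final state
lies outside the basin. -/
def inG {s : ℕ} (A : Fin s → Fin s → ℝ) (n : ℕ) (m : Fin s)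
    (σ : List (Fin s × Fin s)) : Prop :=
  σ ≠ [] ∧ (∀ mv ∈ σ, mv.1 ≠ mv.2) ∧
  (∀ t, 0 < t → t < σ.length - 1 → stateAt n (vertex m) σ t ∈ basin A n m) ∧
  stateAt n (vertex m) σ σ.length ∉ basin A n m

/-- `σ` encodes a path in `𝒥^{(n)}_m`: a path in `𝒢^{(n)}_m` all of whose
transitions are switches away from `m`. -/
def inJ {s : ℕ} (A : Fin s → Fin s → ℝ) (n : ℕ) (m : Fin s)
    (σ : List (Fin s × Fin s)) : Prop :=
  inG A n m σ ∧ ∀ mv ∈ σ, mv.1 = m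

/-- `σ` encodes a path in `𝒦^{(n)}_m`: a path in `𝒢^{(n)}_m` consisting of
consecutive blocks of identical switches from `m` to pairwise distinct strategies. -/
def inK {s : ℕ} (A : Fin s → Fin s → ℝ) (n : ℕ) (m : Fin s)
    (σ : List (Fin s × Fin s)) : Prop :=
  inG A n m σ ∧ ∃ blocks : List (Fin s × ℕ),
    (blocks.map Prod.fst).Nodup ∧ (∀ p ∈ blocks, p.1 ≠ m) ∧
    σ = (blocks.map (fun p => List.replicate p.2 ((m, p.1) : Fin s × Fin s))).flatten

/-- A mixed strategy Nash equilibrium of the symmetric game `A` with support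
exactly `T`. -/
def mixedNashSupp {s : ℕ} (A : Fin s → Fin s → ℝ) (T : Finset (Fin s))
    (p : Fin s → ℝ) : Prop :=
  (∀ i, 0 ≤ p i) ∧ (∑ i, p i) = 1 ∧ (∀ i, p i ≠ 0 ↔ i ∈ T) ∧
  (∀ i ∈ T, ∀ k, pay A i p ≥ pay A k p)

/-- Condition A: coordination game, marginal bandwagon property, and existence of
mixed Nash equilibria with every nonempty support. -/
def CondA {s : ℕ} (A : Fin s → Fin s → ℝ) : Prop :=
  (∀ i j : Fin s, j ≠ i → A i i > A j i) ∧ MBP A ∧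
  (∀ T : Finset (Fin s), T.Nonempty → ∃ p, mixedNashSupp A T p)

/-- `σ` encodes a path in `ℒ^{(n)}_{i,j}`: it starts at the convention `e_i`
and ends at a state in the basin of attraction of convention `j`. -/
def inL {s : ℕ} (A : Fin s → Fin s → ℝ) (n : ℕ) (i j : Fin s)
    (σ : List (Fin s × Fin s)) : Prop :=
  (∀ mv ∈ σ, mv.1 ≠ mv.2) ∧ stateAt n (vertex i) σ σ.length ∈ basin A n j

/-- The minimal cost `C^{(n)}_{ij}` of a path from convention `i` into the basin of
attraction of convention `j`. -/
def transCost {s : ℕ} (A : Fin s → Fin s → ℝ) (n : ℕ) (i j : Fin s) : ℝ :=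
  sInf {r : ℝ | ∃ σ, inL A n i j σ ∧ r = pathCostL A n (vertex i) σ}

/-- The radius quantity `R_{ij}`. -/
def Rq {s : ℕ} (A : Fin s → Fin s → ℝ) (i j : Fin s) : ℝ :=
  (1 / 2) * (A i i - A j i) ^ 2 / ((A i i - A j i) + (A j j - A i j))

-- Basic lemmas
namespace RBFT

variable {s : ℕ}

lemma pay_vertex (A : Fin s → Fin s → ℝ) (l k : Fin s) : pay A l (vertex k) = A l k := by
  simp [pay, vertex, mul_ite, Finset.sum_ite_eq']

lemma pay_step (A : Fin s → Fin s → ℝ) (n : ℕ) (x : Fin s → ℝ) (a b l : Fin s) :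
    pay A l (step n x a b) = pay A l x + (1 / (n:ℝ)) * (A l b - A l a) := by
  simp only [pay, step, mul_add, Finset.sum_add_distrib]
  congr 1
  have h1 : ∀ k : Fin s, A l k * ((1 / (n:ℝ)) * (vertex b k - vertex a k))
      = (1/(n:ℝ)) * (A l k * vertex b k - A l k * vertex a k) := by intro k; ring
  simp only [h1, ← Finset.mul_sum]
  congr 1
  have h2 : ∀ (c : Fin s), ∑ k, A l k * vertex c k = A l c := by
    intro c; simp [vertex, mul_ite, Finset.sum_ite_eq']
  rw [Finset.sum_sub_distrib, h2, h2]

lemma logit_nonneg (A : Fin s → Fin s → ℝ) [NeZero s] (x : Fin s → ℝ) (b : Fin s) :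
    0 ≤ logitCost A x b := by
  have : pay A b x ≤ ⨆ l, pay A l x :=
    le_ciSup (f := fun l => pay A l x) (Set.Finite.bddAbove (Set.finite_range _)) b
  simp [logitCost]; linarith

lemma pay_le_logit (A : Fin s → Fin s → ℝ) [NeZero s] (x : Fin s → ℝ) (b l : Fin s) :
    pay A l x - pay A b x ≤ logitCost A x b := by
  have : pay A l x ≤ ⨆ m, pay A m x :=
    le_ciSup (f := fun m => pay A m x) (Set.Finite.bddAbove (Set.finite_range _)) l
  simp [logitCost]; linarith

lemma pathCost_nonneg (A : Fin s → Fin s → ℝ) [NeZero s] (n : ℕ) :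
    ∀ (σ : List (Fin s × Fin s)) (x : Fin s → ℝ), 0 ≤ pathCostL A n x σ
  | [], _ => le_refl 0
  | mv :: σ, x => by
      have h1 := logit_nonneg A x mv.2
      have h2 := pathCost_nonneg A n σ (step n x mv.1 mv.2)
      simp only [pathCostL]; linarith

end RBFT
namespace RBFT

variable {s : ℕ}

/-- d_l -/
def dd (A : Fin s → Fin s → ℝ) (i l : Fin s) : ℝ := A i i - A l i
/-- d'_l -/
def dp (A : Fin s → Fin s → ℝ) (i l : Fin s) : ℝ := A l l - A i l
/-- c_l -/
def cc (A : Fin s → Fin s → ℝ) (i l : Fin s) : ℝ := dd A i l + dp A i l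
/-- payoff advantage of i over l -/
def FF (A : Fin s → Fin s → ℝ) (i l : Fin s) (x : Fin s → ℝ) : ℝ := pay A i x - pay A l x
/-- component potential -/
def GG (A : Fin s → Fin s → ℝ) (i l : Fin s) (x : Fin s → ℝ) : ℝ :=
  (max (FF A i l x) 0)^2 / (2 * cc A i l)
/-- strategies other than i -/
def Fr (s : ℕ) (i : Fin s) : Finset (Fin s) := Finset.univ.filter (· ≠ i)
/-- the slack constant -/
def CK (A : Fin s → Fin s → ℝ) (i : Fin s) : ℝ :=
  1 + ∑ l ∈ Fr s i, ∑ b ∈ Fr s i, (dd A i l + A l b - A i b)^2 / (2 * cc A i l)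
/-- the potential -/
def WW (A : Fin s → Fin s → ℝ) (i : Fin s) (hne : (Fr s i).Nonempty) (x : Fin s → ℝ) : ℝ :=
  (Fr s i).inf' hne (fun l => GG A i l x)

lemma mem_Fr {i l : Fin s} : l ∈ Fr s i ↔ l ≠ i := by simp [Fr]

section pos
variable {A : Fin s → Fin s → ℝ} {i : Fin s}

lemma dd_pos (hA : CondA A) {l : Fin s} (hl : l ≠ i) : 0 < dd A i l := by
  have := hA.1 i l hl; simp [dd]; linarith

lemma dp_pos (hA : CondA A) {l : Fin s} (hl : l ≠ i) : 0 < dp A i l := by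
  have := hA.1 l i (Ne.symm hl); simp [dp]; linarith

lemma cc_pos (hA : CondA A) {l : Fin s} (hl : l ≠ i) : 0 < cc A i l :=
  add_pos (dd_pos hA hl) (dp_pos hA hl)

lemma GG_nonneg (hA : CondA A) {l : Fin s} (hl : l ≠ i) (x : Fin s → ℝ) : 0 ≤ GG A i l x := by
  have := cc_pos hA hl
  exact div_nonneg (sq_nonneg _) (by linarith)

lemma WW_nonneg (hA : CondA A) (hne : (Fr s i).Nonempty) (x : Fin s → ℝ) : 0 ≤ WW A i hne x :=
  Finset.le_inf' hne _ (fun l hl => GG_nonneg hA (mem_Fr.1 hl) x)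

lemma CK_pos (hA : CondA A) : 0 < CK A i := by
  have h : ∀ l ∈ Fr s i, 0 ≤ ∑ b ∈ Fr s i, (dd A i l + A l b - A i b)^2 / (2 * cc A i l) := by
    intro l hl
    apply Finset.sum_nonneg
    intro b _
    have := cc_pos hA (mem_Fr.1 hl)
    positivity
  have := Finset.sum_nonneg h
  simp only [CK]; linarith

lemma CK_ge (hA : CondA A) {l b : Fin s} (hl : l ∈ Fr s i) (hb : b ∈ Fr s i) :
    (dd A i l + A l b - A i b)^2 / (2 * cc A i l) ≤ CK A i := by
  have h1 : (dd A i l + A l b - A i b)^2 / (2 * cc A i l)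
      ≤ ∑ b' ∈ Fr s i, (dd A i l + A l b' - A i b')^2 / (2 * cc A i l) := by
    apply Finset.single_le_sum (fun b' _ => ?_) hb
    have := cc_pos hA (mem_Fr.1 hl); positivity
  have h2 : ∑ b' ∈ Fr s i, (dd A i l + A l b' - A i b')^2 / (2 * cc A i l)
      ≤ ∑ l' ∈ Fr s i, ∑ b' ∈ Fr s i, (dd A i l' + A l' b' - A i b')^2 / (2 * cc A i l') := by
    apply Finset.single_le_sum (fun l' hl' => ?_) hl
    apply Finset.sum_nonneg (fun b' _ => ?_)
    have := cc_pos hA (mem_Fr.1 hl'); positivity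
  simp only [CK]; linarith

end pos

/-- convexity inequality for ψ(u) = (u⁺)²/(2c) -/
lemma psi1 {u h c : ℝ} (hc : 0 < c) (hh : 0 ≤ h) :
    (max u 0)^2/(2*c) - (max (u-h) 0)^2/(2*c) ≤ (max u 0) * h / c := by
  set p := max u 0 with hp
  set q := max (u - h) 0 with hq
  have hq0 : 0 ≤ q := le_max_right _ _
  have hqp : q ≤ p := max_le_max (by linarith) le_rfl
  have hpq : p - q ≤ h := by
    rcases le_or_gt u 0 with h1 | h1
    · have hp0 : p = 0 := max_eq_right h1
      rw [hp0]; linarith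
    · have hu : u - h ≤ q := le_max_left _ _
      have hpu : p = u := max_eq_left h1.le
      linarith
  have key : p^2 - q^2 ≤ 2*p*h := by nlinarith
  have h2c : (0:ℝ) < 2*c := by linarith
  calc p^2/(2*c) - q^2/(2*c) = (p^2 - q^2)/(2*c) := by ring
    _ ≤ (2*p*h)/(2*c) := by gcongr
    _ = p * h / c := by ring

/-- the alpha-case inequality -/
lemma alphaIneq {cl cb K Fb u : ℝ} (hcl : 0 < cl) (hcb : 0 < cb) (hK : 0 < K)
    (hK2 : K^2 ≤ cl*cb) (hFb : 0 < Fb) (hu : 0 ≤ u) (hcomp : u^2*cb ≤ Fb^2*cl) :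
    u*K/cl ≤ Fb := by
  have h1 : (u*K)^2 ≤ (Fb*cl)^2 := by nlinarith
  have h2 : u*K ≤ Fb*cl := by nlinarith [mul_nonneg hu hK.le, mul_pos hFb hcl]
  calc u*K/cl ≤ Fb*cl/cl := by gcongr
    _ = Fb := by field_simp

/-- the beta-case inequality -/
lemma betaIneq {cl cb K Fb v nn : ℝ} (hcl : 0 < cl) (hcb : 0 < cb) (hK : 0 < K)
    (hK2 : K^2 ≤ cl*cb) (hFb : 0 < Fb) (hv : 0 ≤ v) (hbeta : Fb^2*cl ≤ v^2*cb)
    (hbig : K^2*cb ≤ Fb^2*cl*nn^2) (hnn : 0 < nn) :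
    nn*(Fb^2/(2*cb) - v^2/(2*cl)) + v*K/cl ≤ Fb := by
  set v0 := Real.sqrt (Fb^2*cl/cb) with hv0def
  have hv0nn : 0 ≤ v0 := Real.sqrt_nonneg _
  have hv0sq : v0^2 = Fb^2*cl/cb := Real.sq_sqrt (by positivity)
  have hv0sq' : v0^2 * cb = Fb^2*cl := by rw [hv0sq]; field_simp
  have hsq1 : v0^2 ≤ v^2 := by nlinarith [hv0sq', hcb]
  have hvv0 : v0 ≤ v := by nlinarith [hsq1, mul_nonneg hv hv0nn]
  have hsq2 : K^2 ≤ (nn*v0)^2 := by nlinarith [hv0sq', hcb]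
  have hKnn : K ≤ nn*v0 := by nlinarith [hsq2, mul_nonneg hnn.le hv0nn]
  have hE0 : v0*K ≤ Fb*cl := by nlinarith [mul_nonneg hv0nn hK.le, mul_pos hFb hcl]
  have key : nn*Fb^2*cl - nn*v^2*cb + 2*v*K*cb ≤ 2*Fb*cl*cb := by
    have hfac : 0 ≤ cb*(v - v0)*(nn*(v+v0) - 2*K) := by
      apply mul_nonneg (mul_nonneg hcb.le (by linarith))
      nlinarith
    nlinarith [mul_pos hcl hcb]
  have heq : nn*(Fb^2/(2*cb) - v^2/(2*cl)) + v*K/cl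
      = (nn*Fb^2*cl - nn*v^2*cb + 2*v*K*cb)/(2*cl*cb) := by
    field_simp
  rw [heq]
  rw [div_le_iff₀ (by positivity)]
  linarith [key, mul_pos hcl hcb]

end RBFT
namespace RBFT

variable {s : ℕ} {A : Fin s → Fin s → ℝ} {i : Fin s}

lemma FF_step (A : Fin s → Fin s → ℝ) (i : Fin s) (n : ℕ) (x : Fin s → ℝ) (a b l : Fin s) :
    FF A i l (step n x a b) = FF A i l x - ((A i a - A l a) - (A i b - A l b))/(n:ℝ) := by
  simp only [FF, pay_step]; ring

lemma GG_mono (hA : CondA A) {l : Fin s} (hl : l ≠ i) {x y : Fin s → ℝ}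
    (h : FF A i l x ≤ FF A i l y) : GG A i l x ≤ GG A i l y := by
  have hc := cc_pos hA hl
  simp only [GG]
  have h2 : (max (FF A i l x) 0)^2 ≤ (max (FF A i l y) 0)^2 :=
    pow_le_pow_left₀ (le_max_right _ _) (max_le_max h le_rfl) 2
  exact (div_le_div_iff_of_pos_right (by linarith)).mpr h2

lemma sqBound {K Ki cl cb : ℝ} (hK : 0 < K) (hKKi : K ≤ Ki) (h1 : Ki < cl) (h2 : Ki < cb) :
    K^2 ≤ cl * cb := by nlinarith

lemma bigIneq {CKv cl cb K Ki Fb nn : ℝ} (hcl : 0 < cl) (hcb : 0 < cb) (hnn : 0 < nn)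
    (hK : 0 < K) (hKKi : K ≤ Ki) (h1 : CKv/nn^2 < Fb^2/(2*cb)) (h2 : Ki^2/(2*cl) ≤ CKv) :
    K^2*cb ≤ Fb^2*cl*nn^2 := by
  rw [div_lt_div_iff₀ (by positivity) (by positivity)] at h1
  rw [div_le_iff₀ (by positivity)] at h2
  have hKsq : K^2 ≤ Ki^2 := by nlinarith
  nlinarith [mul_le_mul_of_nonneg_right h2 hcb.le, mul_lt_mul_of_pos_right h1 hcl,
    mul_le_mul_of_nonneg_right hKsq hcb.le]

lemma stepIneq [NeZero s] (hA : CondA A) (hne : (Fr s i).Nonempty) {n : ℕ} (hn : 1 ≤ n)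
    (x : Fin s → ℝ) {a b : Fin s} (hab : a ≠ b) :
    (n:ℝ) * (max (WW A i hne x) (CK A i/(n:ℝ)^2)
      - max (WW A i hne (step n x a b)) (CK A i/(n:ℝ)^2)) ≤ logitCost A x b := by
  have hnR : (0:ℝ) < n := by exact_mod_cast hn
  have hn0 : (n:ℝ) ≠ 0 := ne_of_gt hnR
  set B := CK A i/(n:ℝ)^2 with hBdef
  have hB : 0 < B := div_pos (CK_pos hA) (by positivity)
  set x' := step n x a b with hx'
  rcases le_or_gt (WW A i hne x) B with hWB | hWB
  · have h1 : max (WW A i hne x) B = B := max_eq_right hWB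
    have h3 : max (WW A i hne x) B - max (WW A i hne x') B ≤ 0 := by
      have h2 : B ≤ max (WW A i hne x') B := le_max_right _ _
      rw [h1]; linarith
    calc (n:ℝ) * (max (WW A i hne x) B - max (WW A i hne x') B) ≤ (n:ℝ) * 0 :=
          mul_le_mul_of_nonneg_left h3 hnR.le
      _ = 0 := mul_zero _
      _ ≤ logitCost A x b := logit_nonneg A x b
  · suffices h : (n:ℝ) * (WW A i hne x - WW A i hne x') ≤ logitCost A x b by
      have hmx : max (WW A i hne x) B = WW A i hne x := max_eq_left hWB.le
      have hmx' : WW A i hne x' ≤ max (WW A i hne x') B := le_max_left _ _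
      calc (n:ℝ) * (max (WW A i hne x) B - max (WW A i hne x') B)
          ≤ (n:ℝ) * (WW A i hne x - WW A i hne x') := by
            rw [hmx]; apply mul_le_mul_of_nonneg_left _ hnR.le; linarith
        _ ≤ logitCost A x b := h
    by_cases hbi : b = i
    · have hai : a ≠ i := fun h => hab (by rw [h, hbi])
      have hWle : WW A i hne x ≤ WW A i hne x' := by
        apply Finset.le_inf'
        intro l hl
        have hlne := mem_Fr.1 hl
        have hKneg : (A i a - A l a) - (A i b - A l b) ≤ 0 := by
          rw [hbi]
          by_cases hal : a = l
          · have h1 := dd_pos hA hlne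
            have h2 := dp_pos hA hlne
            simp only [dd, dp] at h1 h2
            rw [hal]
            linarith
          · have := hA.2.1 i l a (Ne.symm hlne) (fun h => hal h.symm) (Ne.symm hai)
            linarith
        have hFle : FF A i l x ≤ FF A i l x' := by
          rw [hx', FF_step]
          have : ((A i a - A l a) - (A i b - A l b))/(n:ℝ) ≤ 0 :=
            div_nonpos_of_nonpos_of_nonneg hKneg hnR.le
          linarith
        calc WW A i hne x ≤ GG A i l x := Finset.inf'_le _ hl
          _ ≤ GG A i l x' := GG_mono hA hlne hFle
      have h9 : (n:ℝ)*(WW A i hne x - WW A i hne x') ≤ (n:ℝ)*0 :=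
        mul_le_mul_of_nonneg_left (by linarith) hnR.le
      have h10 := logit_nonneg A x b
      rw [mul_zero] at h9
      linarith
    · have hbF : b ∈ Fr s i := mem_Fr.2 hbi
      have hccb := cc_pos hA hbi
      have hFb : 0 < FF A i b x := by
        by_contra hc
        push_neg at hc
        have hGb : GG A i b x = 0 := by
          simp only [GG, max_eq_right hc]
          simp
        have hW0 : WW A i hne x ≤ 0 := le_of_le_of_eq (Finset.inf'_le _ hbF) hGb
        linarith
      have hLb : FF A i b x ≤ logitCost A x b := by
        have := pay_le_logit A x b i
        simpa [FF] using this
      obtain ⟨l0, hl0mem, hl0⟩ := Finset.exists_mem_eq_inf' hne (fun l => GG A i l x')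
      have hl0ne := mem_Fr.1 hl0mem
      have hccl := cc_pos hA hl0ne
      have hWx' : WW A i hne x' = GG A i l0 x' := hl0
      set K := (A i a - A l0 a) - (A i b - A l0 b) with hKdef
      have hFFl0 : FF A i l0 x' = FF A i l0 x - K/(n:ℝ) := by rw [hx', FF_step]
      rcases le_or_gt K 0 with hK | hK
      · have hFle : FF A i l0 x ≤ FF A i l0 x' := by
          rw [hFFl0]
          have : K/(n:ℝ) ≤ 0 := div_nonpos_of_nonpos_of_nonneg hK hnR.le
          linarith
        have hWle2 : WW A i hne x ≤ WW A i hne x' := by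
          rw [hWx']
          exact (Finset.inf'_le _ hl0mem).trans (GG_mono hA hl0ne hFle)
        have h9 : (n:ℝ)*(WW A i hne x - WW A i hne x') ≤ (n:ℝ)*0 :=
          mul_le_mul_of_nonneg_left (by linarith) hnR.le
        have h10 := logit_nonneg A x b
        rw [mul_zero] at h9
        linarith
      · -- K > 0
        have hGl0x : GG A i l0 x = (max (FF A i l0 x) 0)^2/(2*cc A i l0) := rfl
        have hGl0x' : GG A i l0 x' = (max (FF A i l0 x - K/(n:ℝ)) 0)^2/(2*cc A i l0) := by
          rw [GG, hFFl0]
        have hcc0 : cc A i l0 ≠ 0 := ne_of_gt hccl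
        have hpsi := psi1 (u := FF A i l0 x) (h := K/(n:ℝ)) (c := cc A i l0) hccl
          (le_of_lt (div_pos hK hnR))
        have hG0 : (n:ℝ)*(GG A i l0 x - GG A i l0 x') ≤ max (FF A i l0 x) 0 * K/cc A i l0 := by
          rw [hGl0x, hGl0x']
          calc (n:ℝ)*((max (FF A i l0 x) 0)^2/(2*cc A i l0)
                - (max (FF A i l0 x - K/(n:ℝ)) 0)^2/(2*cc A i l0))
              ≤ (n:ℝ)*(max (FF A i l0 x) 0 * (K/(n:ℝ)) / cc A i l0) :=
                mul_le_mul_of_nonneg_left hpsi hnR.le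
            _ = max (FF A i l0 x) 0 * K/cc A i l0 := by
                field_simp
        by_cases hl0b : l0 = b
        · have hFbl : 0 < FF A i l0 x := by rw [hl0b]; exact hFb
          have hKcb : K ≤ cc A i l0 := by
            rcases eq_or_ne a i with hai | hai
            · simp only [hKdef, hai, cc, dd, dp, hl0b]
              linarith
            · have hm := hA.2.1 i b a (Ne.symm hbi) (Ne.symm hab) (Ne.symm hai)
              simp only [hKdef, cc, dd, dp, hl0b]
              linarith
          have hWxle : WW A i hne x ≤ GG A i l0 x := Finset.inf'_le _ hl0mem
          have hmaxF : max (FF A i l0 x) 0 = FF A i l0 x := max_eq_left hFbl.le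
          have hstep2 : max (FF A i l0 x) 0 * K / cc A i l0 ≤ FF A i l0 x := by
            rw [hmaxF, div_le_iff₀ hccl]
            nlinarith
          have hchain : (n:ℝ)*(WW A i hne x - WW A i hne x')
              ≤ (n:ℝ)*(GG A i l0 x - GG A i l0 x') := by
            apply mul_le_mul_of_nonneg_left _ hnR.le
            rw [hWx']; linarith
          have hLbl : FF A i l0 x ≤ logitCost A x b := by rw [hl0b]; exact hLb
          linarith
        · set Ki := dd A i l0 + A l0 b - A i b with hKidef
          have hKKi : K ≤ Ki := by
            rcases eq_or_ne a i with hai | hai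
            · simp only [hKdef, hKidef, hai, dd]
              linarith
            · rcases eq_or_ne a l0 with hal | hal
              · have h1 := dd_pos hA hl0ne
                have h2 := dp_pos hA hl0ne
                simp only [dd, dp] at h1 h2
                simp only [hKdef, hKidef, hal, dd]
                linarith
              · have := hA.2.1 i l0 a (Ne.symm hl0ne) (Ne.symm hal) (Ne.symm hai)
                simp only [hKdef, hKidef, dd]
                linarith
          have hKicl : Ki < cc A i l0 := by
            have := hA.2.1 l0 i b hl0ne (Ne.symm hbi) hl0b
            simp only [hKidef, cc, dd, dp]
            linarith
          have hKicb : Ki < cc A i b := by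
            have := hA.2.1 b l0 i (Ne.symm hl0b) hl0ne hbi
            simp only [hKidef, cc, dd, dp]
            linarith
          have hK2 : K^2 ≤ cc A i l0 * cc A i b := sqBound hK hKKi hKicl hKicb
          set u := max (FF A i l0 x) 0 with hudef
          have hu0 : 0 ≤ u := le_max_right _ _
          have hGlu : GG A i l0 x = u^2/(2*cc A i l0) := hGl0x
          have hGbx : GG A i b x = (FF A i b x)^2/(2*cc A i b) := by
            rw [GG, max_eq_left hFb.le]
          rcases le_or_gt (GG A i l0 x) (GG A i b x) with hcase | hcase
          · -- alpha
            have hcomp : u^2 * cc A i b ≤ (FF A i b x)^2 * cc A i l0 := by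
              rw [hGlu, hGbx, div_le_div_iff₀ (by positivity) (by positivity)] at hcase
              linarith
            have halpha := alphaIneq hccl hccb hK hK2 hFb hu0 hcomp
            have hWxle : WW A i hne x ≤ GG A i l0 x := Finset.inf'_le _ hl0mem
            have hchain : (n:ℝ)*(WW A i hne x - WW A i hne x')
                ≤ (n:ℝ)*(GG A i l0 x - GG A i l0 x') := by
              apply mul_le_mul_of_nonneg_left _ hnR.le
              rw [hWx']; linarith
            linarith
          · -- beta
            have hbeta : (FF A i b x)^2 * cc A i l0 ≤ u^2 * cc A i b := by
              rw [hGlu, hGbx, div_lt_div_iff₀ (by positivity) (by positivity)] at hcase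
              linarith
            have hbig : K^2 * cc A i b ≤ (FF A i b x)^2 * cc A i l0 * (n:ℝ)^2 := by
              have h1 : CK A i/(n:ℝ)^2 < (FF A i b x)^2/(2*cc A i b) := by
                calc CK A i/(n:ℝ)^2 = B := hBdef.symm
                  _ < WW A i hne x := hWB
                  _ ≤ GG A i b x := Finset.inf'_le _ hbF
                  _ = _ := hGbx
              have h2 : Ki^2/(2*cc A i l0) ≤ CK A i := by
                have h2a := CK_ge hA hl0mem hbF
                rw [← hKidef] at h2a
                exact h2a
              exact bigIneq hccl hccb hnR hK hKKi h1 h2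
            have hbetaI := betaIneq hccl hccb hK hK2 hFb hu0 hbeta hbig hnR
            have hWxle : WW A i hne x ≤ GG A i b x := Finset.inf'_le _ hbF
            have hchain : (n:ℝ)*(WW A i hne x - WW A i hne x')
                ≤ (n:ℝ)*(GG A i b x - GG A i l0 x) + (n:ℝ)*(GG A i l0 x - GG A i l0 x') := by
              have h6 : (n:ℝ)*(WW A i hne x - WW A i hne x')
                  ≤ (n:ℝ)*(GG A i b x - GG A i l0 x') := by
                apply mul_le_mul_of_nonneg_left _ hnR.le
                rw [hWx']; linarith
              linarith
            have h7 : (n:ℝ)*(GG A i b x - GG A i l0 x)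
                = (n:ℝ)*((FF A i b x)^2/(2*cc A i b) - u^2/(2*cc A i l0)) := by
              rw [hGbx, hGlu]
            linarith

end RBFT
namespace RBFT

variable {s : ℕ} {A : Fin s → Fin s → ℝ} {i : Fin s}

lemma pathCost_ge [NeZero s] (hA : CondA A) (hne : (Fr s i).Nonempty) {n : ℕ} (hn : 1 ≤ n) :
    ∀ (σ : List (Fin s × Fin s)) (x : Fin s → ℝ), (∀ mv ∈ σ, mv.1 ≠ mv.2) →
    (n:ℝ) * (max (WW A i hne x) (CK A i/(n:ℝ)^2)
      - max (WW A i hne (σ.foldl (fun y mv => step n y mv.1 mv.2) x)) (CK A i/(n:ℝ)^2))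
      ≤ pathCostL A n x σ
  | [], x, _ => by simp [pathCostL]
  | mv :: σ, x, h => by
    have h1 := stepIneq hA hne hn x (h mv List.mem_cons_self)
    have h2 := pathCost_ge hA hne hn σ (step n x mv.1 mv.2)
      (fun m hm => h m (List.mem_cons_of_mem _ hm))
    simp only [pathCostL, List.foldl_cons]
    set y := (σ.foldl (fun y mv => step n y mv.1 mv.2) (step n x mv.1 mv.2))
    linarith

lemma WW_vertex (hA : CondA A) (hne : (Fr s i).Nonempty) :
    WW A i hne (vertex i) = (Fr s i).inf' hne (fun l => Rq A i l) := by
  apply Finset.inf'_congr hne rfl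
  intro l hl
  have hlne := mem_Fr.1 hl
  have hd := dd_pos hA hlne
  have hc := cc_pos hA hlne
  have hF : FF A i l (vertex i) = dd A i l := by simp [FF, pay_vertex, dd]
  have hmax : max (FF A i l (vertex i)) 0 = dd A i l := by rw [hF]; exact max_eq_left hd.le
  simp only [GG, hmax, Rq]
  simp only [cc, dd, dp]
  have hne0 : (A i i - A l i) + (A l l - A i l) ≠ 0 := by
    simp only [cc, dd, dp] at hc; linarith
  field_simp

lemma WW_basin_zero (hA : CondA A) (hne : (Fr s i).Nonempty) {n : ℕ} {j : Fin s}
    (hj : j ≠ i) {y : Fin s → ℝ} (hy : y ∈ basin A n j) : WW A i hne y = 0 := by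
  have h1 : FF A i j y ≤ 0 := by
    have := hy.2 i
    simp only [FF]
    linarith
  have h2 : GG A i j y = 0 := by simp [GG, max_eq_right h1]
  have h3 : WW A i hne y ≤ 0 := le_of_le_of_eq (Finset.inf'_le _ (mem_Fr.2 hj)) h2
  exact le_antisymm h3 (WW_nonneg hA hne y)

lemma cost_lower [NeZero s] (hA : CondA A) (hne : (Fr s i).Nonempty) {n : ℕ} (hn : 1 ≤ n)
    {j : Fin s} (hj : j ≠ i) {σ : List (Fin s × Fin s)} (hσ : inL A n i j σ) :
    (n:ℝ) * ((Fr s i).inf' hne (fun l => Rq A i l)) - CK A i/(n:ℝ)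
      ≤ pathCostL A n (vertex i) σ := by
  have hnR : (0:ℝ) < n := by exact_mod_cast hn
  have h := pathCost_ge hA hne hn σ (vertex i) hσ.1
  have hfin : σ.foldl (fun y mv => step n y mv.1 mv.2) (vertex i)
      = stateAt n (vertex i) σ σ.length := by
    simp [stateAt, List.take_length]
  rw [hfin, WW_basin_zero hA hne hj hσ.2, WW_vertex hA hne] at h
  set R := (Fr s i).inf' hne (fun l => Rq A i l)
  set B := CK A i/(n:ℝ)^2 with hBdef
  have hmax0 : max (0:ℝ) B = B := max_eq_right (le_of_lt (div_pos (CK_pos hA) (by positivity)))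
  rw [hmax0] at h
  have h5 : (n:ℝ)*(R - B) ≤ (n:ℝ)*(max R B - B) := by
    apply mul_le_mul_of_nonneg_left _ hnR.le
    have := le_max_left R B
    linarith
  have h6 : (n:ℝ)*B = CK A i/(n:ℝ) := by
    rw [hBdef]
    field_simp
  nlinarith [h, h5, h6]

end RBFT
namespace RBFT

variable {s : ℕ}

/-- point on the segment from `e_i` to `e_j` -/
def XX (i j : Fin s) (τ : ℝ) : Fin s → ℝ := fun h => vertex i h + τ*(vertex j h - vertex i h)

lemma sum_mul_vertex (A : Fin s → Fin s → ℝ) (l c : Fin s) :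
    ∑ k, A l k * vertex c k = A l c := by
  simp [vertex, mul_ite, Finset.sum_ite_eq']

lemma payX (A : Fin s → Fin s → ℝ) (i j l : Fin s) (τ : ℝ) :
    pay A l (XX i j τ) = (1-τ)*A l i + τ*A l j := by
  simp only [pay, XX, mul_add, Finset.sum_add_distrib]
  have h1 : ∀ k : Fin s, A l k * (τ * (vertex j k - vertex i k))
      = τ * (A l k * vertex j k - A l k * vertex i k) := by intro k; ring
  simp only [h1, ← Finset.mul_sum, Finset.sum_sub_distrib, sum_mul_vertex]
  ring

lemma XX_zero (i j : Fin s) : XX i j 0 = vertex i := by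
  funext h; simp [XX]

lemma step_XX (n : ℕ) (i j : Fin s) (τ : ℝ) :
    step n (XX i j τ) i j = XX i j (τ + 1/(n:ℝ)) := by
  funext h; simp only [step, XX]; ring

lemma foldl_XX (n : ℕ) (i j : Fin s) :
    ∀ (M : ℕ) (τ : ℝ), (List.replicate M ((i,j) : Fin s × Fin s)).foldl
      (fun y mv => step n y mv.1 mv.2) (XX i j τ) = XX i j (τ + M/(n:ℝ))
  | 0, τ => by simp
  | M+1, τ => by
    rw [List.replicate_succ, List.foldl_cons]
    have : step n (XX i j τ) i j = XX i j (τ + 1/(n:ℝ)) := step_XX n i j τ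
    rw [this, foldl_XX n i j M]
    congr 1
    push_cast
    ring

lemma XX_apply (i j : Fin s) (hij : i ≠ j) (τ : ℝ) (h : Fin s) :
    XX i j τ h = if h = i then 1-τ else if h = j then τ else 0 := by
  simp only [XX, vertex]
  split_ifs with h1 h2 h2
  · exact absurd (h1.symm.trans h2) hij
  · ring
  · ring
  · ring

lemma sumBound {d dpv nn μ : ℝ} (hd : 0 < d) (hdp : 0 < dpv) (hn : 1 ≤ nn)
    (hμ : μ ≤ nn*(d/(d+dpv)) + 1) (hμ0 : 0 ≤ μ) :
    μ*d - ((d+dpv)/nn)*(μ*(μ-1)/2) ≤ nn*((1/2)*d^2/(d+dpv)) + (d+dpv) := by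
  have hc : 0 < d + dpv := by linarith
  have hnn : 0 < nn := by linarith
  have ht1 : d/(d+dpv) ≤ 1 := by rw [div_le_one hc]; linarith
  have hμ2 : μ ≤ 2*nn := by
    have := mul_le_mul_of_nonneg_left ht1 hnn.le
    rw [mul_one] at this
    linarith
  have hμt : μ*(d+dpv) ≤ nn*d + (d+dpv) := by
    have h3 := mul_le_mul_of_nonneg_right hμ hc.le
    have h4 : nn*(d/(d+dpv))*(d+dpv) = nn*d := by field_simp
    nlinarith
  have key : 2*nn*(μ*d) - (d+dpv)*(μ*(μ-1)) ≤ nn^2*d^2/(d+dpv) + 2*nn*(d+dpv) := by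
    have h5 : 0 ≤ (nn*d - (d+dpv)*μ)^2/(d+dpv) := by positivity
    have h6 : (nn*d - (d+dpv)*μ)^2/(d+dpv)
        = nn^2*d^2/(d+dpv) - 2*nn*μ*d + (d+dpv)*μ^2 := by
      field_simp
      ring
    nlinarith [mul_le_mul_of_nonneg_left hμ2 (mul_pos hc hc).le]
  have hgoal : μ*d - ((d+dpv)/nn)*(μ*(μ-1)/2)
      = (2*nn*(μ*d) - (d+dpv)*(μ*(μ-1)))/(2*nn) := by
    field_simp
  have hgoal2 : (nn^2*d^2/(d+dpv) + 2*nn*(d+dpv))/(2*nn)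
      = nn*((1/2)*d^2/(d+dpv)) + (d+dpv) := by
    field_simp
  rw [hgoal]
  calc (2*nn*(μ*d) - (d+dpv)*(μ*(μ-1)))/(2*nn)
      ≤ (nn^2*d^2/(d+dpv) + 2*nn*(d+dpv))/(2*nn) := by gcongr
    _ = nn*((1/2)*d^2/(d+dpv)) + (d+dpv) := hgoal2

end RBFT
namespace RBFT

variable {s : ℕ} {A : Fin s → Fin s → ℝ} {i j : Fin s}

lemma sum_vertex (k : Fin s) : ∑ h, vertex k h = 1 := by
  simp [vertex, Finset.sum_ite_eq']

lemma NEfacts [NeZero s] (hA : CondA A) (hij : j ≠ i) :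
    ∀ k, pay A k (XX i j (dd A i j / cc A i j)) ≤ pay A i (XX i j (dd A i j / cc A i j)) := by
  have hij' : i ≠ j := Ne.symm hij
  obtain ⟨p, hp0, hpsum, hpsupp, hpNE⟩ := hA.2.2 {i,j} ⟨i, by simp⟩
  have hzero : ∀ k, k ≠ i → k ≠ j → p k = 0 := by
    intro k h1 h2
    by_contra hc
    have := (hpsupp k).1 hc
    simp only [Finset.mem_insert, Finset.mem_singleton] at this
    tauto
  have hsum2 : p i + p j = 1 := by
    have h3 : ∑ k ∈ ({i,j} : Finset (Fin s)), p k = ∑ k, p k :=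
      Finset.sum_subset (Finset.subset_univ _) (fun k _ hk => by
        simp only [Finset.mem_insert, Finset.mem_singleton, not_or] at hk
        exact hzero k hk.1 hk.2)
    rw [Finset.sum_pair hij'] at h3
    rw [h3, hpsum]
  have hpayp : ∀ l, pay A l p = A l i * p i + A l j * p j := by
    intro l
    have h4 : ∑ k ∈ ({i,j} : Finset (Fin s)), A l k * p k = ∑ k, A l k * p k :=
      Finset.sum_subset (Finset.subset_univ _) (fun k _ hk => by
        simp only [Finset.mem_insert, Finset.mem_singleton, not_or] at hk
        rw [hzero k hk.1 hk.2, mul_zero])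
    rw [Finset.sum_pair hij'] at h4
    rw [pay, ← h4]
  have heq : pay A i p = pay A j p :=
    le_antisymm (hpNE j (by simp) i) (hpNE i (by simp) j)
  have hcc := cc_pos hA hij
  have hpj : p j = dd A i j / cc A i j := by
    have h4 : A i i * p i + A i j * p j = A j i * p i + A j j * p j := by
      rw [← hpayp, ← hpayp, heq]
    have hpi : p i = 1 - p j := by linarith
    rw [hpi] at h4
    rw [eq_div_iff (ne_of_gt hcc)]
    simp only [cc, dd, dp]
    ring_nf
    ring_nf at h4
    linarith
  have hXp : XX i j (dd A i j / cc A i j) = p := by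
    rw [← hpj]
    funext k
    rw [XX_apply i j hij' _ k]
    split_ifs with h1 h2
    · rw [h1]; linarith
    · rw [h2]
    · exact (hzero k h1 h2).symm
  intro k
  rw [hXp]
  exact hpNE i (by simp) k

lemma seg_le [NeZero s] (hA : CondA A) (hij : j ≠ i) (k : Fin s) {τ : ℝ} (h0 : 0 ≤ τ)
    (ht : τ ≤ dd A i j / cc A i j) : pay A k (XX i j τ) ≤ pay A i (XX i j τ) := by
  set t := dd A i j / cc A i j with htdef
  have htpos : 0 < t := div_pos (dd_pos hA hij) (cc_pos hA hij)
  have hstar := NEfacts hA hij k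
  rw [payX, payX] at hstar
  have h0' : A k i ≤ A i i := by
    rcases eq_or_ne k i with h | h
    · rw [h]
    · exact (hA.1 i k h).le
  rw [payX, payX]
  nlinarith [mul_nonneg (sub_nonneg.2 ht) (sub_nonneg.2 h0'), mul_nonneg h0 (sub_nonneg.2 hstar)]

lemma logit_seg [NeZero s] (hA : CondA A) (hij : j ≠ i) {τ : ℝ} (h0 : 0 ≤ τ)
    (ht : τ ≤ dd A i j / cc A i j) :
    logitCost A (XX i j τ) j = dd A i j - cc A i j * τ := by
  have hsup : (⨆ l, pay A l (XX i j τ)) = pay A i (XX i j τ) :=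
    le_antisymm (ciSup_le fun l => seg_le hA hij l h0 ht)
      (le_ciSup (f := fun l => pay A l (XX i j τ)) (Set.Finite.bddAbove (Set.finite_range _)) i)
  rw [logitCost, hsup, payX, payX]
  simp only [dd, cc, dp]
  ring

lemma costRep [NeZero s] (hA : CondA A) (hij : j ≠ i) {n : ℕ} (hn : 1 ≤ n) :
    ∀ (M : ℕ) (τ0 : ℝ), 0 ≤ τ0 → (∀ kk : ℕ, kk < M → τ0 + (kk:ℝ)/n ≤ dd A i j / cc A i j) →
    pathCostL A n (XX i j τ0) (List.replicate M ((i,j) : Fin s × Fin s))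
      = ∑ k ∈ Finset.range M, (dd A i j - cc A i j * (τ0 + (k:ℝ)/n))
  | 0, τ0, _, _ => by simp [pathCostL]
  | M+1, τ0, h0, hcond => by
    have hnR : (0:ℝ) < n := by exact_mod_cast hn
    rw [List.replicate_succ]
    simp only [pathCostL]
    have h1 : logitCost A (XX i j τ0) j = dd A i j - cc A i j * τ0 := by
      have := hcond 0 (Nat.succ_pos M)
      simp only [Nat.cast_zero, zero_div, add_zero] at this
      exact logit_seg hA hij h0 this
    have h2 : step n (XX i j τ0) i j = XX i j (τ0 + 1/(n:ℝ)) := step_XX n i j τ0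
    have h3 := costRep hA hij hn M (τ0 + 1/(n:ℝ)) (by positivity)
      (fun kk hkk => by
        have := hcond (kk+1) (by omega)
        push_cast at this ⊢
        rw [add_div] at this
        linarith [this])
    rw [h1, h2, h3, Finset.sum_range_succ']
    have h4 : ∀ k : ℕ, dd A i j - cc A i j * (τ0 + 1/(n:ℝ) + (k:ℝ)/n)
        = dd A i j - cc A i j * (τ0 + ((k+1 : ℕ):ℝ)/n) := by
      intro k
      push_cast
      ring
    rw [Finset.sum_congr rfl (fun k _ => h4 k)]
    push_cast
    ring

end RBFT
namespace RBFT

variable {s : ℕ} {A : Fin s → Fin s → ℝ} {i j : Fin s}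

lemma gaussSum : ∀ M : ℕ, (∑ k ∈ Finset.range M, (k:ℝ)) = M*(M-1)/2
  | 0 => by simp
  | M+1 => by
    rw [Finset.sum_range_succ, gaussSum M]
    push_cast
    ring

lemma basin_XX [NeZero s] (hA : CondA A) (hij : j ≠ i) {n : ℕ} (hn : 1 ≤ n) {M : ℕ}
    (hMn : M ≤ n) (hMl : dd A i j/cc A i j < (M:ℝ)/n) :
    XX i j ((M:ℝ)/n) ∈ basin A n j := by
  have hij' : i ≠ j := Ne.symm hij
  have hnR : (0:ℝ) < n := by exact_mod_cast hn
  have hτ1 : (M:ℝ)/n ≤ 1 := by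
    rw [div_le_one hnR]
    exact_mod_cast hMn
  have hτ0 : (0:ℝ) ≤ (M:ℝ)/n := by positivity
  refine ⟨⟨?_, ?_, ?_⟩, ?_⟩
  · intro h
    rw [XX_apply i j hij']
    split_ifs
    · linarith
    · exact hτ0
    · exact le_rfl
  · simp only [XX]
    rw [Finset.sum_add_distrib, ← Finset.mul_sum, Finset.sum_sub_distrib,
      sum_vertex, sum_vertex]
    ring
  · intro h
    rw [XX_apply i j hij']
    split_ifs
    · refine ⟨(n:ℤ) - (M:ℤ), ?_⟩
      push_cast
      rw [sub_div, div_self (ne_of_gt hnR)]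
    · exact ⟨(M:ℤ), by push_cast; rfl⟩
    · exact ⟨0, by simp⟩
  · intro k
    have hd := dd_pos hA hij
    have hdp := dp_pos hA hij
    have hcc := cc_pos hA hij
    have hcne : cc A i j ≠ 0 := ne_of_gt hcc
    have htst1 : dd A i j/cc A i j < 1 := by
      rw [div_lt_one hcc]
      simp only [cc]
      linarith
    have hpayij : pay A i (XX i j (dd A i j/cc A i j)) = pay A j (XX i j (dd A i j/cc A i j)) := by
      rw [payX, payX]
      simp only [cc, dd, dp] at hcne ⊢
      field_simp
      ring
    have h1 : pay A k (XX i j (dd A i j/cc A i j)) ≤ pay A j (XX i j (dd A i j/cc A i j)) :=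
      (NEfacts hA hij k).trans_eq hpayij
    have h2 : A k j ≤ A j j := by
      rcases eq_or_ne k j with h | h
      · rw [h]
      · exact (hA.1 j k h).le
    rw [ge_iff_le, payX, payX]
    rw [payX, payX] at h1
    nlinarith [mul_nonneg (sub_nonneg.2 hτ1) (sub_nonneg.2 h1),
      mul_nonneg (sub_nonneg.2 hMl.le) (sub_nonneg.2 h2)]

lemma transCost_upper [NeZero s] (hA : CondA A) (hij : j ≠ i) {n : ℕ} (hn : 1 ≤ n) :
    (∃ σ, inL A n i j σ) ∧ transCost A n i j ≤ (n:ℝ) * Rq A i j + cc A i j := by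
  have hnR : (0:ℝ) < n := by exact_mod_cast hn
  have hd := dd_pos hA hij
  have hdp := dp_pos hA hij
  have hcc := cc_pos hA hij
  set t := dd A i j / cc A i j with htdef
  have htpos : 0 < t := div_pos hd hcc
  have htlt : t < 1 := by
    rw [htdef, div_lt_one hcc]
    simp only [cc]
    linarith
  set M := Nat.floor ((n:ℝ)*t) + 1 with hMdef
  have hflo : ((Nat.floor ((n:ℝ)*t)):ℝ) ≤ (n:ℝ)*t := Nat.floor_le (by positivity)
  have hMub : (M:ℝ) ≤ (n:ℝ)*t + 1 := by
    rw [hMdef]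
    push_cast
    linarith
  have hMlb : (n:ℝ)*t < M := by
    rw [hMdef]
    push_cast
    exact Nat.lt_floor_add_one _
  have hMn : M ≤ n := by
    have h5 : (n:ℝ)*t < n := by nlinarith
    have h6 : Nat.floor ((n:ℝ)*t) < n := by
      rw [Nat.floor_lt (by positivity)]
      exact_mod_cast h5
    omega
  have hMl : t < (M:ℝ)/n := by
    rw [lt_div_iff₀ hnR]
    linarith
  set σ := List.replicate M ((i,j) : Fin s × Fin s) with hσdef
  have hstate : stateAt n (vertex i) σ σ.length = XX i j ((M:ℝ)/n) := by
    rw [stateAt, List.take_length, hσdef, ← XX_zero i j, foldl_XX, zero_add]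
  have hbasin := basin_XX hA hij hn hMn hMl
  have hinL : inL A n i j σ := by
    constructor
    · intro mv hmv
      have := List.eq_of_mem_replicate hmv
      rw [this]
      exact Ne.symm hij
    · rw [hstate]
      exact hbasin
  have hτcond : ∀ kk : ℕ, kk < M → (0:ℝ) + (kk:ℝ)/n ≤ t := by
    intro kk hkk
    have h7 : kk ≤ Nat.floor ((n:ℝ)*t) := by omega
    have h8 : (kk:ℝ) ≤ (n:ℝ)*t := le_trans (by exact_mod_cast h7) hflo
    rw [zero_add, div_le_iff₀ hnR]
    linarith
  have hcost : pathCostL A n (vertex i) σ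
      = ∑ k ∈ Finset.range M, (dd A i j - cc A i j * ((0:ℝ) + (k:ℝ)/n)) := by
    rw [hσdef, ← XX_zero i j]
    exact costRep hA hij hn M 0 le_rfl hτcond
  have hsum : ∑ k ∈ Finset.range M, (dd A i j - cc A i j * ((0:ℝ) + (k:ℝ)/n))
      = (M:ℝ)*dd A i j - (cc A i j/(n:ℝ))*((M:ℝ)*((M:ℝ)-1)/2) := by
    have h9 : ∀ k : ℕ, dd A i j - cc A i j * ((0:ℝ) + (k:ℝ)/n)
        = dd A i j - (cc A i j/(n:ℝ))*(k:ℝ) := by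
      intro k
      ring
    rw [Finset.sum_congr rfl (fun k _ => h9 k), Finset.sum_sub_distrib,
      Finset.sum_const, Finset.card_range, ← Finset.mul_sum, gaussSum]
    simp [nsmul_eq_mul]
  have hμ : (M:ℝ) ≤ (n:ℝ)*(dd A i j/(dd A i j + dp A i j)) + 1 := by
    have : cc A i j = dd A i j + dp A i j := rfl
    rw [← this]
    exact hMub
  have hbound := sumBound hd hdp (by exact_mod_cast hn) hμ (by positivity)
  have hpathle : pathCostL A n (vertex i) σ ≤ (n:ℝ)*Rq A i j + cc A i j := by
    rw [hcost, hsum]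
    have hccE : cc A i j = dd A i j + dp A i j := rfl
    have hRqE : Rq A i j = (1/2)*(dd A i j)^2/(dd A i j + dp A i j) := rfl
    rw [hccE, hRqE]
    exact hbound
  refine ⟨⟨σ, hinL⟩, ?_⟩
  have hle : transCost A n i j ≤ pathCostL A n (vertex i) σ := by
    apply csInf_le
    · refine ⟨0, fun r hr => ?_⟩
      obtain ⟨σ', _, hrr⟩ := hr
      rw [hrr]
      exact pathCost_nonneg A n σ' _
    · exact ⟨σ, hinL, rfl⟩
  exact hle.trans hpathle

end RBFT
open RBFT in
/-- **Radius bounds for transition costs (Proposition C.2).** -/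
theorem radius_bounds_for_transition_costs
    (s : ℕ) (hs : 2 ≤ s)
    (A : Fin s → Fin s → ℝ) (hA : CondA A) (i : Fin s) :
    (∀ j, j ≠ i →
      Filter.limsup (fun n : ℕ => (1 / (n : ℝ)) * transCost A n i j) Filter.atTop
        ≤ Rq A i j) ∧
    Filter.Tendsto
      (fun n : ℕ => (1 / (n : ℝ)) * sInf {r : ℝ | ∃ j, j ≠ i ∧ r = transCost A n i j})
      Filter.atTop
      (nhds (sInf {r : ℝ | ∃ j, j ≠ i ∧ r = Rq A i j})) := by
  haveI : NeZero s := ⟨by omega⟩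
  have hne : (RBFT.Fr s i).Nonempty := by
    by_cases hi : i = ⟨0, by omega⟩
    · exact ⟨⟨1, by omega⟩, RBFT.mem_Fr.2 (by rw [hi]; simp [Fin.ext_iff])⟩
    · exact ⟨⟨0, by omega⟩, RBFT.mem_Fr.2 (fun h => hi h.symm)⟩
  set Rstar := (RBFT.Fr s i).inf' hne (fun l => Rq A i l) with hRstar
  have htc_nonneg : ∀ (n : ℕ) (j : Fin s), 0 ≤ transCost A n i j := by
    intro n j
    apply Real.sInf_nonneg
    intro r hr
    obtain ⟨σ', _, hrr⟩ := hr
    rw [hrr]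
    exact RBFT.pathCost_nonneg A n σ' _
  constructor
  · intro j hj
    have hub : ∀ᶠ n : ℕ in Filter.atTop,
        (1/(n:ℝ)) * transCost A n i j ≤ Rq A i j + cc A i j * (1/(n:ℝ)) := by
      filter_upwards [Filter.eventually_ge_atTop 1] with n hn
      have h := (RBFT.transCost_upper hA hj hn).2
      have hnR : (0:ℝ) < n := by exact_mod_cast hn
      calc (1/(n:ℝ))*transCost A n i j ≤ (1/(n:ℝ))*((n:ℝ)*Rq A i j + cc A i j) := by
            apply mul_le_mul_of_nonneg_left h (by positivity)
        _ = Rq A i j + cc A i j * (1/(n:ℝ)) := by field_simp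
    have hg : Filter.Tendsto (fun n : ℕ => Rq A i j + cc A i j * (1/(n:ℝ)))
        Filter.atTop (nhds (Rq A i j)) := by
      have h1 := tendsto_one_div_atTop_nhds_zero_nat.const_mul (cc A i j)
      rw [mul_zero] at h1
      have h2 := h1.const_add (Rq A i j)
      rw [add_zero] at h2
      exact h2
    have hcob : Filter.IsCoboundedUnder (· ≤ ·) Filter.atTop
        (fun n : ℕ => (1/(n:ℝ)) * transCost A n i j) := by
      apply Filter.isCoboundedUnder_le_of_eventually_le (x := 0) Filter.atTop
      filter_upwards with n
      have := htc_nonneg n j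
      positivity
    calc Filter.limsup (fun n : ℕ => (1/(n:ℝ)) * transCost A n i j) Filter.atTop
        ≤ Filter.limsup (fun n : ℕ => Rq A i j + cc A i j * (1/(n:ℝ))) Filter.atTop :=
          Filter.limsup_le_limsup hub hcob hg.isBoundedUnder_le
      _ = Rq A i j := hg.limsup_eq
  · have hsetRq : {r : ℝ | ∃ j, j ≠ i ∧ r = Rq A i j} = (fun l => Rq A i l) '' ↑(RBFT.Fr s i) := by
      ext r
      constructor
      · rintro ⟨j, hj, rfl⟩
        exact ⟨j, by simpa [RBFT.mem_Fr] using hj, rfl⟩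
      · rintro ⟨j, hj, rfl⟩
        exact ⟨j, by simpa [RBFT.mem_Fr] using hj, rfl⟩
    have hInfRq : sInf {r : ℝ | ∃ j, j ≠ i ∧ r = Rq A i j} = Rstar := by
      rw [hsetRq, hRstar, Finset.inf'_eq_csInf_image]
    rw [hInfRq]
    obtain ⟨j0, hj0mem, hj0⟩ := Finset.exists_mem_eq_inf' hne (fun l => Rq A i l)
    have hj0i := RBFT.mem_Fr.1 hj0mem
    have hlowt : Filter.Tendsto (fun n : ℕ => Rstar - CK A i * (1/(n:ℝ)))
        Filter.atTop (nhds Rstar) := by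
      have h1 := tendsto_one_div_atTop_nhds_zero_nat.const_mul (CK A i)
      rw [mul_zero] at h1
      have h2 := (tendsto_const_nhds (x := Rstar) (f := Filter.atTop (α := ℕ))).sub h1
      rw [sub_zero] at h2
      exact h2
    have hupt : Filter.Tendsto (fun n : ℕ => Rstar + cc A i j0 * (1/(n:ℝ)))
        Filter.atTop (nhds Rstar) := by
      have h1 := tendsto_one_div_atTop_nhds_zero_nat.const_mul (cc A i j0)
      rw [mul_zero] at h1
      have h2 := h1.const_add Rstar
      rw [add_zero] at h2
      exact h2
    apply tendsto_of_tendsto_of_tendsto_of_le_of_le' hlowt hupt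
    · -- lower bound eventually
      filter_upwards [Filter.eventually_ge_atTop 1] with n hn
      have hnR : (0:ℝ) < n := by exact_mod_cast hn
      have hsInf_ge : (n:ℝ)*Rstar - CK A i/(n:ℝ)
          ≤ sInf {r : ℝ | ∃ j, j ≠ i ∧ r = transCost A n i j} := by
        have hnem : {r : ℝ | ∃ j, j ≠ i ∧ r = transCost A n i j}.Nonempty :=
          ⟨transCost A n i j0, j0, hj0i, rfl⟩
        apply le_csInf hnem
        rintro r ⟨j, hj, rfl⟩
        have hnonempty : {r : ℝ | ∃ σ, inL A n i j σ ∧ r = pathCostL A n (vertex i) σ}.Nonempty := by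
          obtain ⟨σ, hσ⟩ := (RBFT.transCost_upper hA hj hn).1
          exact ⟨pathCostL A n (vertex i) σ, σ, hσ, rfl⟩
        apply le_csInf hnonempty
        rintro r' ⟨σ', hσ', rfl⟩
        exact RBFT.cost_lower hA hne hn hj hσ'
      have h3 : Rstar - CK A i*(1/(n:ℝ)) ≤ (1/(n:ℝ))*((n:ℝ)*Rstar - CK A i/(n:ℝ)) := by
        have hCK := RBFT.CK_pos hA (i := i)
        have h4 : (1/(n:ℝ))*((n:ℝ)*Rstar - CK A i/(n:ℝ)) = Rstar - CK A i/(n:ℝ)^2 := by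
          field_simp
        rw [h4]
        have h5 : CK A i/(n:ℝ)^2 ≤ CK A i/(n:ℝ) := by
          have hn1 : (1:ℝ) ≤ (n:ℝ) := by exact_mod_cast hn
          apply div_le_div_of_nonneg_left hCK.le hnR
          nlinarith
        have h6 : CK A i*(1/(n:ℝ)) = CK A i/(n:ℝ) := by ring
        rw [h6]
        linarith
      calc Rstar - CK A i*(1/(n:ℝ)) ≤ (1/(n:ℝ))*((n:ℝ)*Rstar - CK A i/(n:ℝ)) := h3
        _ ≤ (1/(n:ℝ))*sInf {r : ℝ | ∃ j, j ≠ i ∧ r = transCost A n i j} := by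
          apply mul_le_mul_of_nonneg_left hsInf_ge (by positivity)
    · -- upper bound eventually
      filter_upwards [Filter.eventually_ge_atTop 1] with n hn
      have hnR : (0:ℝ) < n := by exact_mod_cast hn
      have hle1 : sInf {r : ℝ | ∃ j, j ≠ i ∧ r = transCost A n i j} ≤ transCost A n i j0 := by
        apply csInf_le
        · exact ⟨0, fun r hr => by obtain ⟨j, _, hrr⟩ := hr; rw [hrr]; exact htc_nonneg n j⟩
        · exact ⟨j0, hj0i, rfl⟩
      have hle2 := (RBFT.transCost_upper hA hj0i hn).2
      have hRq0 : Rq A i j0 = Rstar := hj0.symm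
      calc (1/(n:ℝ))*sInf {r : ℝ | ∃ j, j ≠ i ∧ r = transCost A n i j}
          ≤ (1/(n:ℝ))*((n:ℝ)*Rstar + cc A i j0) := by
            apply mul_le_mul_of_nonneg_left _ (by positivity)
            rw [← hRq0]
            exact hle1.trans hle2
        _ = Rstar + cc A i j0*(1/(n:ℝ)) := by field_simp
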